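/- arXiv:cs/0507034 — 6 statements merged into one kernel-verified Lean document; each statement's English description precedes it below -/
import Mathlib

section
/- In the network B_clockwise(κ,m), for every source node s and every target node t, every greedy route with respect to the distance function δ_clockwise from s reaches t in at most 3m−2 hops. -/
/-- The clockwise distance `(v - u) mod n` between two nodes on a ring of `n` nodes. -/
def clockDelta (n : ℕ) (u v : Fin n) : ℕ := ((v : ℕ) + n - (u : ℕ)) % n

/-- The level `ℓ(u) = (m-1) - (u mod m)` of a node. -/
def clockLevel (m : ℕ) {n : ℕ} (u : Fin n) : ℕ := (m - 1) - ((u : ℕ) % m)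

/-- The directed edges of the Papillon network `B_clockwise(κ, m)` on `n = κ^m * m` nodes:
`u` links to `(u + x) mod n` for `x ∈ {1 + i·m·κ^{ℓ(u)} : 0 ≤ i < κ}`. -/
def clockEdge (κ m : ℕ) (u v : Fin (κ ^ m * m)) : Prop :=
  ∃ i < κ, (v : ℕ) = ((u : ℕ) + (1 + i * m * κ ^ clockLevel m u)) % (κ ^ m * m)

/-- `v` is a greedy next hop from `u` towards target `t` with respect to `δ_clockwise`:
`v` is a neighbor of `u` minimizing the clockwise distance to `t` among `u`'s neighbors. -/
def clockGreedyStep (κ m : ℕ) (t u v : Fin (κ ^ m * m)) : Prop :=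
  clockEdge κ m u v ∧ ∀ v', clockEdge κ m u v' →
    clockDelta (κ ^ m * m) v t ≤ clockDelta (κ ^ m * m) v' t


/-!
Every link advances `u mod m` by one, so within `m - 1` hops a greedy route reaches a node of
level `m - 1`. At a node of level `ℓ` at clockwise distance `1 ≤ d < m κ^(ℓ+1)` from the target,
the link with `i = (d - 1) / (m κ^ℓ)` does not overshoot and leaves a distance below `m κ^ℓ`, and
the greedy choice does at least as well. As `n = m κ^m`, the next `m` hops bring the distance below
`m`; since even the short link decreases the distance, `m - 1` further hops reach the target.
-/

section ClockDelta

variable {n : ℕ}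

theorem add_clockDelta_mod (u t : Fin n) : ((u : ℕ) + clockDelta n u t) % n = t := by
  rw [clockDelta, Nat.add_mod_mod, Nat.add_sub_cancel' (by omega), Nat.add_mod_right,
    Nat.mod_eq_of_lt t.isLt]

theorem clockDelta_eq_of_add_mod {u t : Fin n} {d : ℕ} (hd : d < n)
    (h : ((u : ℕ) + d) % n = t) : clockDelta n u t = d := by
  have hmod : (u : ℕ) + clockDelta n u t ≡ (u : ℕ) + d [MOD n] := by
    rw [Nat.ModEq, add_clockDelta_mod, h]
  exact Nat.ModEq.eq_of_lt_of_lt (Nat.ModEq.add_left_cancel' _ hmod)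
    (Nat.mod_lt _ (by omega)) hd

theorem clockDelta_eq_zero_iff {u t : Fin n} : clockDelta n u t = 0 ↔ u = t := by
  constructor
  · intro h
    have := add_clockDelta_mod u t
    rw [h, Nat.add_zero, Nat.mod_eq_of_lt u.isLt] at this
    exact Fin.ext this
  · rintro rfl
    exact clockDelta_eq_of_add_mod u.pos (by simp [Nat.mod_eq_of_lt u.isLt])

theorem clockDelta_of_add_mod {u v t : Fin n} {x : ℕ} (hx : x ≤ clockDelta n u t)
    (hv : (v : ℕ) = ((u : ℕ) + x) % n) : clockDelta n v t = clockDelta n u t - x := by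
  refine clockDelta_eq_of_add_mod ((Nat.sub_le _ _).trans_lt (Nat.mod_lt _ (by omega))) ?_
  rw [hv, Nat.mod_add_mod, Nat.add_assoc, Nat.add_sub_cancel' hx, add_clockDelta_mod]

end ClockDelta

theorem Nat.exists_one_add_mul_le_sub_lt {d p κ : ℕ} (hd : 0 < d) (hdp : d < p * κ) :
    ∃ i < κ, 1 + i * p ≤ d ∧ d - (1 + i * p) < p := by
  have hp : 0 < p := Nat.pos_of_ne_zero (by rintro rfl; omega)
  refine ⟨(d - 1) / p, (Nat.div_lt_iff_lt_mul hp).2 (by rw [Nat.mul_comm]; omega), ?_, ?_⟩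
  · have := Nat.div_mul_le_self (d - 1) p
    omega
  · have := Nat.mod_add_div' (d - 1) p
    have := Nat.mod_lt (d - 1) hp
    omega

section Papillon

variable {κ m : ℕ}

theorem clockEdge.mod_eq {u v : Fin (κ ^ m * m)} (h : clockEdge κ m u v) :
    (v : ℕ) % m = ((u : ℕ) + 1) % m := by
  obtain ⟨i, -, hv⟩ := h
  rw [hv, Nat.mod_mod_of_dvd _ (Dvd.intro_left _ rfl),
    show (u : ℕ) + (1 + i * m * κ ^ clockLevel m u) = (u + 1) + i * κ ^ clockLevel m u * m by ring,
    Nat.add_mul_mod_self_right]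

theorem clockGreedyStep.clockDelta_le_sub {t u v : Fin (κ ^ m * m)}
    (h : clockGreedyStep κ m t u v) {i : ℕ} (hi : i < κ)
    (hx : 1 + i * m * κ ^ clockLevel m u ≤ clockDelta _ u t) :
    clockDelta _ v t ≤ clockDelta _ u t - (1 + i * m * κ ^ clockLevel m u) :=
  (clockDelta_of_add_mod (v := ⟨_, Nat.mod_lt _ u.pos⟩) hx rfl) ▸ h.2 _ ⟨i, hi, rfl⟩

theorem clockGreedyStep.clockDelta_lt {t u v : Fin (κ ^ m * m)}
    (h : clockGreedyStep κ m t u v) (hu : u ≠ t) : clockDelta _ v t < clockDelta _ u t := by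
  have hκ : 0 < κ := by obtain ⟨⟨i, hi, -⟩, -⟩ := h; omega
  have hpos : 0 < clockDelta _ u t := Nat.pos_of_ne_zero (clockDelta_eq_zero_iff.not.2 hu)
  have := h.clockDelta_le_sub hκ (by simpa [Nat.one_le_iff_ne_zero] using hpos.ne')
  simp only [Nat.zero_mul, Nat.add_zero] at this
  omega

theorem clockGreedyStep.clockDelta_lt_of_lt {t u v : Fin (κ ^ m * m)}
    (h : clockGreedyStep κ m t u v) (hu : u ≠ t)
    (hlt : clockDelta _ u t < m * κ ^ clockLevel m u * κ) :
    clockDelta _ v t < m * κ ^ clockLevel m u := by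
  have hpos : 0 < clockDelta _ u t := Nat.pos_of_ne_zero (clockDelta_eq_zero_iff.not.2 hu)
  obtain ⟨i, hi, hle, hsub⟩ := Nat.exists_one_add_mul_le_sub_lt hpos hlt
  rw [← Nat.mul_assoc] at hle hsub
  exact (h.clockDelta_le_sub hi hle).trans_lt hsub

end Papillon

section GreedyRoute

variable {κ m : ℕ} {t : Fin (κ ^ m * m)} {w : ℕ → Fin (κ ^ m * m)}

theorem greedyRoute_mod (hstep : ∀ j, w j ≠ t → clockGreedyStep κ m t (w j) (w (j + 1)))
    {j k : ℕ} (hk : ∀ i < k, w (j + i) ≠ t) : (w (j + k) : ℕ) % m = ((w j : ℕ) + k) % m := by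
  induction k with
  | zero => rfl
  | succ k ih =>
    rw [← Nat.add_assoc, (hstep _ (hk k k.lt_succ_self)).1.mod_eq, ← Nat.mod_add_mod,
      ih fun i hi => hk i (hi.trans k.lt_succ_self), Nat.mod_add_mod, Nat.add_assoc]

theorem greedyRoute_clockDelta_add_le
    (hstep : ∀ j, w j ≠ t → clockGreedyStep κ m t (w j) (w (j + 1)))
    {j k : ℕ} (hk : ∀ i < k, w (j + i) ≠ t) :
    clockDelta _ (w (j + k)) t + k ≤ clockDelta _ (w j) t := by
  induction k with
  | zero => rfl
  | succ k ih =>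
    rw [← Nat.add_assoc j]
    have := (hstep _ (hk k k.lt_succ_self)).clockDelta_lt (hk k k.lt_succ_self)
    have := ih fun i hi => hk i (hi.trans k.lt_succ_self)
    omega

/-- `w j` has level `m - 1`, and each hop divides the bound on the distance by `κ`. -/
theorem greedyRoute_clockDelta_lt
    (hstep : ∀ j, w j ≠ t → clockGreedyStep κ m t (w j) (w (j + 1)))
    {j k : ℕ} (hj : (w j : ℕ) % m = 0) (hkm : k ≤ m) (hk : ∀ i < k, w (j + i) ≠ t) :
    clockDelta _ (w (j + k)) t < m * κ ^ (m - k) := by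
  induction k with
  | zero =>
    exact (Nat.mod_lt _ (w j).pos).trans_eq (Nat.mul_comm _ _)
  | succ k ih =>
    have hne := hk k k.lt_succ_self
    have hlevel : clockLevel m (w (j + k)) = m - (k + 1) := by
      rw [clockLevel, greedyRoute_mod hstep fun i hi => hk i (hi.trans k.lt_succ_self),
        Nat.add_mod, hj, Nat.zero_add, Nat.mod_mod, Nat.mod_eq_of_lt (by omega)]
      omega
    have hlt := ih (by omega) fun i hi => hk i (hi.trans k.lt_succ_self)
    rw [show m - k = m - (k + 1) + 1 by omega, pow_succ, ← Nat.mul_assoc, ← hlevel] at hlt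
    rw [← Nat.add_assoc, ← hlevel]
    exact (hstep _ hne).clockDelta_lt_of_lt hne hlt

end GreedyRoute

theorem clockwise_greedy_worst_case_general (κ m : ℕ)
    (t : Fin (κ ^ m * m)) (w : ℕ → Fin (κ ^ m * m))
    (hstep : ∀ j, w j ≠ t → clockGreedyStep κ m t (w j) (w (j + 1))) :
    ∃ L ≤ 3 * m - 2, w L = t := by
  by_contra! hmiss
  have hm : 0 < m := Nat.pos_of_mul_pos_left t.pos
  set a := (m - (w 0 : ℕ) % m) % m
  have ha : a < m := Nat.mod_lt _ hm
  have hne : ∀ i < a + (2 * m - 1), w i ≠ t := fun i hi => hmiss i (by omega)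
  have htop : (w a : ℕ) % m = 0 := by
    have := greedyRoute_mod hstep (j := 0) (k := a) fun i hi => hne _ (by omega)
    rw [Nat.zero_add] at this
    rw [this, ← Nat.mod_add_mod, Nat.add_mod_mod, Nat.add_sub_cancel' (Nat.mod_lt _ hm).le,
      Nat.mod_self]
  have hnear : clockDelta _ (w (a + m)) t < m := by
    simpa using greedyRoute_clockDelta_lt hstep htop le_rfl fun i hi => hne _ (by omega)
  have hreach := greedyRoute_clockDelta_add_le hstep (j := a + m) (k := m - 1)
    fun i hi => hne _ (by omega)
  exact hmiss (a + m + (m - 1)) (by omega) (clockDelta_eq_zero_iff.1 (by omega))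

/-- In `B_clockwise(κ, m)`, every greedy route w.r.t. `δ_clockwise` from any source `s`
reaches any target `t` in at most `3m - 2` hops. -/
theorem clockwise_greedy_worst_case (κ m : ℕ) (hκ : 1 ≤ κ) (hm : 1 ≤ m)
    (s t : Fin (κ ^ m * m)) (w : ℕ → Fin (κ ^ m * m))
    (h0 : w 0 = s)
    (hstep : ∀ j, w j ≠ t → clockGreedyStep κ m t (w j) (w (j + 1))) :
    ∃ L ≤ 3 * m - 2, w L = t :=
  clockwise_greedy_worst_case_general κ m t w hstep
end

section
/- In the network B_clockwise(κ,m), for every ordered pair of nodes (s,t) there exists a directed path from s to t of length at most 2m−1 (i.e., the directed diameter of B_clockwise(κ,m) is at most 2m−1). -/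
/-!
Every link advances a node by one modulo `m`, so the `m` nodes visited by any walk from `s`
have the levels `m - 1 - (s + j) % m` for `j < m`, a permutation of `0, …, m - 1`. Taking at the
node of level `ℓ` the link whose index is the `ℓ`-th base-`κ` digit of `q` therefore moves the
walk `m + m * q` nodes clockwise in `m` hops, for any `q < κ ^ m`, and further short links add
one each. With `r = d % m` extra short links and a suitable `q`, every clockwise distance `d` is
covered in `m + r ≤ 2m - 1` hops.
-/

open Finset Fin.NatCast

theorem Function.Periodic.sum_range_add {M : Type*} [AddCancelCommMonoid M] {g : ℕ → M}
    {m : ℕ} (hg : Function.Periodic g m) (a : ℕ) :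
    ∑ i ∈ range m, g (a + i) = ∑ i ∈ range m, g i := by
  induction a with
  | zero => simp
  | succ a ih =>
    rw [← ih]
    apply add_right_cancel (b := g a)
    calc ∑ i ∈ range m, g (a + 1 + i) + g a
        = ∑ i ∈ range (m + 1), g (a + i) := by
          rw [sum_range_succ']; simp only [add_assoc, add_comm 1, add_zero]
      _ = ∑ i ∈ range m, g (a + i) + g a := by rw [sum_range_succ, hg a]

theorem Nat.sum_range_div_pow_mod_mul_pow (κ q m : ℕ) :
    ∑ l ∈ range m, q / κ ^ l % κ * κ ^ l = q % κ ^ m := by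
  induction m with
  | zero => simp [Nat.mod_one]
  | succ m ih => rw [sum_range_succ, ih, Nat.mod_pow_succ, mul_comm]

section Papillon

variable {κ m : ℕ}

theorem clockLevel_natCast [NeZero (κ ^ m * m)] (x : ℕ) :
    clockLevel m (x : Fin (κ ^ m * m)) = m - 1 - x % m := by
  rw [clockLevel, Fin.val_natCast, Nat.mod_mod_of_dvd _ (dvd_mul_left m _)]

theorem clockEdge_natCast [NeZero (κ ^ m * m)] (x : ℕ) {i : ℕ} (hi : i < κ) :
    clockEdge κ m (x : Fin (κ ^ m * m))
      ((x + (1 + i * m * κ ^ (m - 1 - x % m)) : ℕ) : Fin (κ ^ m * m)) :=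
  ⟨i, hi, by rw [Fin.val_natCast, Fin.val_natCast, clockLevel_natCast, Nat.mod_add_mod]⟩

variable (κ m) in
/-- The position, as an unreduced natural number, reached from `s` after `j` hops when hop `i`
uses link number `c i`. -/
def clockPos (c : ℕ → ℕ) (s j : ℕ) : ℕ :=
  s + ∑ i ∈ range j, (1 + c i * m * κ ^ (m - 1 - (s + i) % m))

theorem clockPos_eq (c : ℕ → ℕ) (s j : ℕ) :
    clockPos κ m c s j = s + j + m * ∑ i ∈ range j, c i * κ ^ (m - 1 - (s + i) % m) := by
  simp only [clockPos, sum_add_distrib, mul_sum, sum_const, card_range, smul_eq_mul, mul_one,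
    add_assoc]
  exact congrArg _ (congrArg _ (sum_congr rfl fun i _ => by ring))

theorem clockPos_mod (c : ℕ → ℕ) (s j : ℕ) : clockPos κ m c s j % m = (s + j) % m := by
  rw [clockPos_eq, Nat.add_mul_mod_self_left]

theorem clockPos_succ (c : ℕ → ℕ) (s j : ℕ) :
    clockPos κ m c s (j + 1) =
      clockPos κ m c s j + (1 + c j * m * κ ^ (m - 1 - (s + j) % m)) := by
  rw [clockPos, clockPos, sum_range_succ, add_assoc]

theorem clockEdge_clockPos [NeZero (κ ^ m * m)] {c : ℕ → ℕ} (hc : ∀ i, c i < κ)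
    (s j : ℕ) :
    clockEdge κ m (clockPos κ m c s j : Fin (κ ^ m * m))
      (clockPos κ m c s (j + 1) : Fin (κ ^ m * m)) := by
  rw [clockPos_succ, ← clockPos_mod c s j]
  exact clockEdge_natCast _ (hc j)

variable (κ m) in
/-- Hop `i < m` of the walk from `s` uses, at level `ℓ`, the `ℓ`-th base-`κ` digit of `q`;
later hops are short links. -/
def clockDigits (q s i : ℕ) : ℕ :=
  if i < m then q / κ ^ (m - 1 - (s + i) % m) % κ else 0

theorem clockDigits_lt (hκ : 0 < κ) (q s i : ℕ) : clockDigits κ m q s i < κ := by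
  unfold clockDigits
  split_ifs
  exacts [Nat.mod_lt _ hκ, hκ]

theorem sum_clockDigits {q L : ℕ} (hq : q < κ ^ m) (hL : m ≤ L) (s : ℕ) :
    ∑ i ∈ range L, clockDigits κ m q s i * κ ^ (m - 1 - (s + i) % m) = q := by
  set f : ℕ → ℕ := fun l => q / κ ^ l % κ * κ ^ l
  have hperiodic : Function.Periodic (fun x => f (m - 1 - x % m)) m := fun x => by
    simp only [Nat.add_mod_right]
  calc ∑ i ∈ range L, clockDigits κ m q s i * κ ^ (m - 1 - (s + i) % m)
      = ∑ i ∈ range m, f (m - 1 - (s + i) % m) := by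
        rw [← sum_range_add_sum_Ico _ hL, sum_eq_zero (s := Ico m L) fun i hi => ?_, add_zero]
        · exact sum_congr rfl fun i hi => by simp [clockDigits, mem_range.mp hi, f]
        · simp [clockDigits, (mem_Ico.mp hi).1]
    _ = ∑ i ∈ range m, f (m - 1 - i) := by
        rw [hperiodic.sum_range_add s]
        exact sum_congr rfl fun i hi => by rw [Nat.mod_eq_of_lt (mem_range.mp hi)]
    _ = q := by
        rw [sum_range_reflect f m, Nat.sum_range_div_pow_mod_mul_pow, Nat.mod_eq_of_lt hq]

theorem clockPos_clockDigits {q L : ℕ} (hq : q < κ ^ m) (hL : m ≤ L) (s : ℕ) :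
    clockPos κ m (clockDigits κ m q s) s L = s + L + m * q := by
  rw [clockPos_eq, sum_clockDigits hq hL]

/-- The hop count `L = m + d % m` makes `d - L` a multiple `m * q` of `m`, and `q` is taken
modulo `κ ^ m`, which changes `m * q` only by multiples of `n = κ ^ m * m`. -/
theorem add_hops_add_mul_modEq (hκm : 0 < κ ^ m) (s d : ℕ) :
    s + (m + d % m) + m * ((d / m + κ ^ m - 1) % κ ^ m) ≡ s + d [MOD κ ^ m * m] := by
  obtain ⟨k, hk⟩ : ∃ k, κ ^ m = k + 1 := Nat.exists_eq_succ_of_ne_zero hκm.ne'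
  have hsum : s + (m + d % m) + m * (d / m + κ ^ m - 1) = s + d + κ ^ m * m := by
    rw [hk, ← add_assoc (d / m), Nat.add_sub_cancel]
    conv_rhs => rw [← Nat.mod_add_div d m]
    ring
  calc s + (m + d % m) + m * ((d / m + κ ^ m - 1) % κ ^ m)
      ≡ s + (m + d % m) + m * (d / m + κ ^ m - 1) [MOD κ ^ m * m] := by
        refine Nat.ModEq.add_left _ ?_
        rw [mul_comm (κ ^ m), Nat.ModEq, Nat.mul_mod_mul_left, Nat.mul_mod_mul_left, Nat.mod_mod]
    _ ≡ s + d [MOD κ ^ m * m] := by rw [hsum]; exact Nat.add_modEq_right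

theorem exists_clockWalk [NeZero (κ ^ m * m)] (s d : ℕ) :
    ∃ L ≤ 2 * m - 1, ∃ w : ℕ → Fin (κ ^ m * m),
      w 0 = s ∧ w L = (s + d : ℕ) ∧ ∀ j < L, clockEdge κ m (w j) (w (j + 1)) := by
  have hn : κ ^ m * m ≠ 0 := NeZero.ne _
  have hκm : 0 < κ ^ m := Nat.pos_of_ne_zero (left_ne_zero_of_mul hn)
  have hm : 0 < m := Nat.pos_of_ne_zero (right_ne_zero_of_mul hn)
  have hκ : 0 < κ := Nat.pos_of_ne_zero fun h => by simp [h, hm.ne'] at hκm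
  let q := (d / m + κ ^ m - 1) % κ ^ m
  refine ⟨m + d % m, by have := Nat.mod_lt d hm; omega,
    fun j => (clockPos κ m (clockDigits κ m q s) s j : ℕ), by simp [clockPos], ?_,
    fun j _ => clockEdge_clockPos (clockDigits_lt hκ q s) s j⟩
  dsimp only
  rw [clockPos_clockDigits (Nat.mod_lt _ hκm) (Nat.le_add_right m _)]
  exact Fin.ext <| by
    rw [Fin.val_natCast, Fin.val_natCast]
    exact add_hops_add_mul_modEq hκm s d

end Papillon

theorem clockwise_diameter_general (κ m : ℕ)
    (s t : Fin (κ ^ m * m)) :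
    ∃ L ≤ 2 * m - 1, ∃ w : ℕ → Fin (κ ^ m * m),
      w 0 = s ∧ w L = t ∧ ∀ j < L, clockEdge κ m (w j) (w (j + 1)) := by
  have : NeZero (κ ^ m * m) := ⟨s.pos.ne'⟩
  obtain ⟨L, hL, w, hw0, hwL, hw⟩ := exists_clockWalk (κ := κ) (m := m) s (t + κ ^ m * m - s)
  have hst : (s : ℕ) + (t + κ ^ m * m - s) = t + κ ^ m * m := by omega
  refine ⟨L, hL, w, by rw [hw0, Fin.cast_val_eq_self], ?_, hw⟩
  rw [hwL, hst]
  exact Fin.ext (by rw [Fin.val_natCast, Nat.add_mod_right, Nat.mod_eq_of_lt t.isLt])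

/-- In `B_clockwise(κ, m)`, for every ordered pair of nodes `(s, t)` there is a directed
path from `s` to `t` of length at most `2m - 1`. -/
theorem clockwise_diameter (κ m : ℕ) (hκ : 1 ≤ κ) (hm : 1 ≤ m)
    (s t : Fin (κ ^ m * m)) :
    ∃ L ≤ 2 * m - 1, ∃ w : ℕ → Fin (κ ^ m * m),
      w 0 = s ∧ w L = t ∧ ∀ j < L, clockEdge κ m (w j) (w (j + 1)) :=
  clockwise_diameter_general κ m s t
end

section
/- In the network B_clockwise(κ,m), the average over all ordered pairs (s,t) of nodes of the length of the shortest directed path from s to t is at most 1.5m. -/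
/-!
Let `δ = (t - s) mod n = q m + r` with `r < m`. From `s`, take `r` short links and then `m`
further links. The levels of `m` consecutive nodes are `0, …, m-1` in some order, so taking at
level `ℓ` the link with index the `ℓ`-th base-`κ` digit of `X` moves by `m (1 + X)` in total;
with `X ≡ q - 1 (mod κ^m)` the walk ends at `t`. Hence `d(s, t) ≤ (δ mod m) + m`, and the mean
of `δ mod m` over all `t` is `(m - 1) / 2`.
-/

open Finset

theorem Finset.sum_range_mod_add {M : Type*} [AddCommMonoid M] (f : ℕ → M) (c m : ℕ) :
    ∑ k ∈ range m, f ((c + k) % m) = ∑ k ∈ range m, f k := by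
  rcases Nat.eq_zero_or_pos m with rfl | hm
  · simp
  have := NeZero.of_pos hm
  rw [← Fin.sum_univ_eq_sum_range (fun k => f ((c + k) % m)), ← Fin.sum_univ_eq_sum_range]
  simpa [Fin.val_add] using Equiv.sum_comp (Equiv.addLeft (Fin.ofNat m c)) (fun i : Fin m => f i)

theorem Nat.sum_div_pow_mod_mul_pow (b X n : ℕ) :
    ∑ ℓ ∈ range n, X / b ^ ℓ % b * b ^ ℓ = X % b ^ n := by
  induction n with
  | zero => simp [Nat.mod_one]
  | succ n ih => rw [sum_range_succ, ih, pow_succ, Nat.mod_mul]; ring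

theorem Fin.sum_val_mod (K m : ℕ) :
    ∑ t : Fin (K * m), t.val % m = K * ∑ b ∈ range m, b := by
  rw [← Equiv.sum_comp finProdFinEquiv]
  simp [Fintype.sum_prod_type, Nat.mod_eq_of_lt, Fin.sum_univ_eq_sum_range (fun b => b) m]

namespace Papillon

variable {κ m : ℕ}

/-- Junk value `sInf ∅ = 0` for unreachable pairs; `clockDist_le` shows there are none. -/
noncomputable def clockDist (κ m : ℕ) (s t : Fin (κ ^ m * m)) : ℕ :=
  sInf {L : ℕ | ∃ w : ℕ → Fin (κ ^ m * m),
    w 0 = s ∧ w L = t ∧ ∀ j < L, clockEdge κ m (w j) (w (j + 1))}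

theorem pos_of_node (s : Fin (κ ^ m * m)) : 0 < κ ∧ 0 < m := by
  have hm : 0 < m := Nat.pos_of_mul_pos_left s.pos
  exact ⟨Nat.pos_of_ne_zero (by rintro rfl; simp [zero_pow hm.ne'] at s; exact s.elim0), hm⟩

theorem clockEdge_mod_add (hN : 0 < κ ^ m * m) (a : ℕ) {i : ℕ} (hi : i < κ) :
    clockEdge κ m ⟨a % (κ ^ m * m), Nat.mod_lt _ hN⟩
      ⟨(a + (1 + i * m * κ ^ (m - 1 - a % m))) % (κ ^ m * m), Nat.mod_lt _ hN⟩ :=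
  ⟨i, hi, by simp only [clockLevel, Nat.mod_mod_of_dvd _ (dvd_mul_left m _), Nat.mod_add_mod]⟩

theorem clockDist_le_of_linkIndices (s t : Fin (κ ^ m * m)) (L : ℕ) (c : ℕ → ℕ)
    (hc : ∀ k < L, c k < κ)
    (ht : (s + L + m * ∑ k ∈ range L, c k * κ ^ (m - 1 - (s + k) % m)) % (κ ^ m * m) = t) :
    clockDist κ m s t ≤ L := by
  let pos : ℕ → ℕ := fun j => s + j + m * ∑ k ∈ range j, c k * κ ^ (m - 1 - (s + k) % m)
  -- each step adds `1` plus a multiple of `m`: after `j` steps the level is `m - 1 - (s + j) % m`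
  have pos_mod (j : ℕ) : pos j % m = (s + j) % m := Nat.add_mul_mod_self_left _ _ _
  have pos_succ (j : ℕ) : pos (j + 1) = pos j + (1 + c j * m * κ ^ (m - 1 - pos j % m)) := by
    rw [pos_mod]; simp only [pos, sum_range_succ]; ring
  refine Nat.sInf_le ⟨fun j => ⟨pos j % (κ ^ m * m), Nat.mod_lt _ s.pos⟩, ?_, Fin.ext ht,
    fun j hj => ?_⟩
  · ext; simp [pos, Nat.mod_eq_of_lt s.isLt]
  · simpa only [pos_succ] using clockEdge_mod_add s.pos (pos j) (hc j hj)

theorem clockDist_le (s t : Fin (κ ^ m * m)) : clockDist κ m s t ≤ (t - s).val % m + m := by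
  obtain ⟨hκ, hm⟩ := pos_of_node s
  have := NeZero.of_pos s.pos
  have hκm : 0 < κ ^ m := by positivity
  set δ := (t - s).val
  set q := δ / m
  set r := δ % m
  set X := (q + κ ^ m - 1) % κ ^ m
  let digit : ℕ → ℕ := fun ℓ => X / κ ^ ℓ % κ
  refine clockDist_le_of_linkIndices s t (r + m)
    (fun k => if k < r then 0 else digit (m - 1 - (s + k) % m))
    (fun k _ => by split_ifs; exacts [hκ, Nat.mod_lt _ hκ]) ?_
  have hdigits : ∑ k ∈ range (r + m), (if k < r then 0 else digit (m - 1 - (s + k) % m)) *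
      κ ^ (m - 1 - (s + k) % m) = X := by
    rw [sum_range_add, sum_eq_zero (fun k hk => by simp [mem_range.mp hk]), zero_add]
    simp only [add_lt_iff_neg_left, not_lt_zero, if_false, ← add_assoc]
    calc ∑ k ∈ range m, digit (m - 1 - (s + r + k) % m) * κ ^ (m - 1 - (s + r + k) % m)
        = ∑ j ∈ range m, digit (m - 1 - j) * κ ^ (m - 1 - j) :=
          sum_range_mod_add (fun j => digit (m - 1 - j) * κ ^ (m - 1 - j)) (s + r) m
      _ = ∑ ℓ ∈ range m, digit ℓ * κ ^ ℓ := sum_range_reflect (fun ℓ => digit ℓ * κ ^ ℓ) m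
      _ = X % κ ^ m := Nat.sum_div_pow_mod_mul_pow κ X m
      _ = X := Nat.mod_eq_of_lt (Nat.mod_lt _ hκm)
  have hX : 1 + X ≡ q [MOD κ ^ m] :=
    calc 1 + X ≡ 1 + (q + κ ^ m - 1) [MOD κ ^ m] := (Nat.mod_modEq _ _).add_left 1
      _ = q + κ ^ m := Nat.add_sub_of_le (le_add_left hκm)
      _ ≡ q [MOD κ ^ m] := Nat.add_modEq_right
  rw [hdigits]
  calc (s + (r + m) + m * X) % (κ ^ m * m) = (s + r + (1 + X) * m) % (κ ^ m * m) := by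
        congr 1; ring
    _ = (s + r + q * m) % (κ ^ m * m) := (hX.mul_right' m).add_left _
    _ = (s + δ) % (κ ^ m * m) := by rw [add_assoc, add_comm r, Nat.div_add_mod']
    _ = t := by rw [← Fin.val_add, add_sub_cancel]

theorem two_mul_sum_clockDist_le (s : Fin (κ ^ m * m)) :
    2 * ∑ t, clockDist κ m s t ≤ 3 * m * (κ ^ m * m) := by
  have := NeZero.of_pos s.pos
  calc 2 * ∑ t, clockDist κ m s t ≤ 2 * ∑ t, ((t - s).val % m + m) := by
        gcongr with t; exact clockDist_le s t
    _ = 2 * ∑ t : Fin (κ ^ m * m), (t.val % m + m) := by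
        congr 1; exact Equiv.sum_comp (Equiv.subRight s) (fun t : Fin _ => t.val % m + m)
    _ = κ ^ m * ((∑ b ∈ range m, b) * 2) + 2 * m * (κ ^ m * m) := by
        rw [sum_add_distrib, Fin.sum_val_mod]
        simp only [sum_const, card_univ, Fintype.card_fin, smul_eq_mul]
        ring
    _ ≤ κ ^ m * (m * m) + 2 * m * (κ ^ m * m) := by
        rw [sum_range_id_mul_two]; gcongr; exact Nat.sub_le m 1
    _ = 3 * m * (κ ^ m * m) := by ring

end Papillon

open Papillon in
theorem clockwise_average_shortest_path_general (κ m : ℕ) :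
    (∑ s : Fin (κ ^ m * m), ∑ t : Fin (κ ^ m * m),
        ((sInf {L : ℕ | ∃ w : ℕ → Fin (κ ^ m * m),
          w 0 = s ∧ w L = t ∧ ∀ j < L, clockEdge κ m (w j) (w (j + 1))} : ℕ) : ℝ)) /
      ((κ ^ m * m : ℕ) : ℝ) ^ 2 ≤ (3 / 2 : ℝ) * m := by
  have hsum : 2 * ∑ s, ∑ t, clockDist κ m s t ≤ 3 * m * (κ ^ m * m) * (κ ^ m * m) :=
    calc 2 * ∑ s, ∑ t, clockDist κ m s t = ∑ s, 2 * ∑ t, clockDist κ m s t := mul_sum _ _ _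
      _ ≤ ∑ _s : Fin (κ ^ m * m), 3 * m * (κ ^ m * m) :=
          sum_le_sum fun s _ => two_mul_sum_clockDist_le s
      _ = 3 * m * (κ ^ m * m) * (κ ^ m * m) := by simp [mul_comm]
  have hsumℝ : 2 * ∑ s, ∑ t, (clockDist κ m s t : ℝ) ≤ 3 * m * (κ ^ m * m : ℕ) ^ 2 := by
    exact_mod_cast hsum.trans_eq (by ring)
  refine div_le_of_le_mul₀ (by positivity) (by positivity) ?_
  unfold clockDist at hsumℝ
  linarith

/-- In `B_clockwise(κ, m)`, the average over all ordered pairs `(s, t)` of the length of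
the shortest directed path from `s` to `t` is at most `1.5 m`. -/
theorem clockwise_average_shortest_path (κ m : ℕ) (hκ : 1 ≤ κ) (hm : 1 ≤ m) :
    (∑ s : Fin (κ ^ m * m), ∑ t : Fin (κ ^ m * m),
        ((sInf {L : ℕ | ∃ w : ℕ → Fin (κ ^ m * m),
          w 0 = s ∧ w L = t ∧ ∀ j < L, clockEdge κ m (w j) (w (j + 1))} : ℕ) : ℝ)) /
      ((κ ^ m * m : ℕ) : ℝ) ^ 2 ≤ (3 / 2 : ℝ) * m :=
  clockwise_average_shortest_path_general κ m
end

section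
/- In the network B_absolute(k,m), for every ordered pair of nodes (s,t) there exists a directed path from s to t of length at most 2m−1 that, moreover, does not use any back edge (any edge with offset x = −m+1); in particular the directed diameter of B_absolute(k,m) is at most 2m−1. -/
/-- Number of nodes of the Papillon network `B_absolute(k, m)`. -/
def absN (k m : ℕ) : ℕ := (2 * k + 1) ^ m * m

/-- The absolute distance `min((v - u) mod n, (u - v) mod n)` on a ring of `n` nodes. -/
def absDelta (n : ℕ) (u v : Fin n) : ℕ :=
  min (((v : ℕ) + n - (u : ℕ)) % n) (((u : ℕ) + n - (v : ℕ)) % n)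

/-- The level `ℓ(u) = (m-1) - (u mod m)` of a node. -/
def absLevel (m : ℕ) {n : ℕ} (u : Fin n) : ℕ := (m - 1) - ((u : ℕ) % m)

/-- The `2k+1` "forward" links of `B_absolute(k, m)`: `u` links to `(u + x) mod n` for
`x ∈ {1 + i·m·(2k+1)^{ℓ(u)} : -k ≤ i ≤ k}`. -/
def absForwardEdge (k m : ℕ) (u v : Fin (absN k m)) : Prop :=
  ∃ i : ℤ, -(k : ℤ) ≤ i ∧ i ≤ (k : ℤ) ∧
    ((v : ℕ) : ℤ) =
      (((u : ℕ) : ℤ) + (1 + i * (m : ℤ) * ((2 * (k : ℤ) + 1)) ^ absLevel m u)) %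
        ((absN k m : ℕ) : ℤ)

/-- The "back edge" of `B_absolute(k, m)`: `u` links to `(u + x) mod n` for `x = -m + 1`. -/
def absBackEdge (k m : ℕ) (u v : Fin (absN k m)) : Prop :=
  ((v : ℕ) : ℤ) = (((u : ℕ) : ℤ) + (1 - (m : ℤ))) % ((absN k m : ℕ) : ℤ)

/-- The directed edges of `B_absolute(k, m)`. -/
def absEdge (k m : ℕ) (u v : Fin (absN k m)) : Prop :=
  absForwardEdge k m u v ∨ absBackEdge k m u v

/-- `v` is a greedy next hop from `u` towards target `t` with respect to `δ_absolute`: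
`v` is a neighbor of `u` minimizing the absolute distance to `t` among `u`'s neighbors. -/
def absGreedyStep (k m : ℕ) (t u v : Fin (absN k m)) : Prop :=
  absEdge k m u v ∧ ∀ v', absEdge k m u v' →
    absDelta (absN k m) v t ≤ absDelta (absN k m) v' t

/-!
Write `t - s = L + m * D` with `m ≤ L < 2m`. A forward step from `u` adds
`1 + i * m * (2k+1)^ℓ(u)`, so the `j`-th node of a walk from `s` has index `≡ s + j (mod m)`, and
the levels of the first `m` nodes run through `0, …, m-1` once each. Taking, at the step of level
`ℓ`, the `ℓ`-th digit of a balanced base-`(2k+1)` expansion of `D` modulo `(2k+1)^m`, and `i = 0`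
on the remaining `L - m` steps, the walk is displaced by `L + m * D` modulo `n = m * (2k+1)^m`.
-/

open Finset

theorem exists_balanced_digits (k m : ℕ) (D : ℤ) :
    ∃ d : ℕ → ℤ, (∀ ℓ, -(k : ℤ) ≤ d ℓ ∧ d ℓ ≤ k) ∧
      ∑ ℓ ∈ range m, d ℓ * (2 * k + 1) ^ ℓ ≡ D [ZMOD (2 * k + 1) ^ m] := by
  induction m generalizing D with
  | zero => exact ⟨0, fun _ => by simp, Int.modEq_one⟩
  | succ m ih =>
    set c := D.bmod (2 * k + 1)
    have hc_bounds : -(k : ℤ) ≤ c ∧ c ≤ k := by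
      have hlo := Int.le_bmod (x := D) (m := 2 * k + 1) (by omega)
      have hhi := Int.bmod_lt (x := D) (m := 2 * k + 1) (by omega)
      push_cast at hlo hhi
      omega
    obtain ⟨D', hD'⟩ : (2 * k + 1 : ℤ) ∣ D - c := by
      have hc : D ≡ c [ZMOD (2 * k + 1 : ℕ)] := Int.bmod_emod.symm
      push_cast at hc
      exact hc.symm.dvd
    obtain ⟨d, hd, hsum⟩ := ih D'
    refine ⟨fun | 0 => c | ℓ + 1 => d ℓ, fun | 0 => hc_bounds | ℓ + 1 => hd ℓ, ?_⟩
    have hfactor : ∑ ℓ ∈ range m, d ℓ * (2 * k + 1 : ℤ) ^ (ℓ + 1) =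
        (2 * k + 1) * ∑ ℓ ∈ range m, d ℓ * (2 * k + 1) ^ ℓ := by
      rw [mul_sum]
      exact sum_congr rfl fun _ _ => by ring
    have hD : D = c + (2 * k + 1) * D' := by rw [← hD']; ring
    rw [sum_range_succ', pow_succ', hfactor, pow_zero, mul_one, hD, add_comm _ c]
    exact (hsum.mul_left' (c := 2 * k + 1)).add_left c

theorem sum_range_comp_add_mod {M : Type*} [AddCommMonoid M] (f : ℕ → M) (m s : ℕ) :
    ∑ j ∈ range m, f ((s + j) % m) = ∑ j ∈ range m, f j := by
  induction s with
  | zero => exact sum_congr rfl fun j hj => by rw [zero_add, Nat.mod_eq_of_lt (mem_range.1 hj)]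
  | succ s ih =>
    rcases m with _ | m
    · simp
    rw [← ih, sum_range_succ, sum_range_succ' (fun j => f ((s + j) % (m + 1)))]
    simp only [add_assoc, add_comm 1, Nat.add_mod_right, add_zero]

theorem Int.exists_natCast_lt_modEq (a : ℤ) {m : ℕ} (hm : 0 < m) :
    ∃ r : ℕ, r < m ∧ (r : ℤ) ≡ a [ZMOD m] := by
  have hr : ((a % m).toNat : ℤ) = a % m := Int.toNat_of_nonneg (Int.emod_nonneg _ (by omega))
  refine ⟨(a % m).toNat, ?_, hr ▸ Int.mod_modEq a m⟩
  have := Int.emod_lt_of_pos a (by omega : (0 : ℤ) < m)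
  omega

open scoped Fin.IntCast

theorem Fin.natCast_val_intCast {n : ℕ} [NeZero n] (x : ℤ) :
    (((x : Fin n) : ℕ) : ℤ) = x % n := by
  rw [Fin.val_intCast, Int.toNat_of_nonneg (Int.emod_nonneg _ (by exact_mod_cast NeZero.ne n))]

def walkLevel (m s j : ℕ) : ℕ := (m - 1) - (s + j) % m

theorem sum_range_comp_walkLevel {M : Type*} [AddCommMonoid M] (f : ℕ → M) (m s : ℕ) :
    ∑ j ∈ range m, f (walkLevel m s j) = ∑ ℓ ∈ range m, f ℓ :=
  (sum_range_comp_add_mod (fun j => f (m - 1 - j)) m s).trans (sum_range_reflect f m)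

/-- Integer lift of the node reached from `s` after `j` forward steps, step `i` taking the link with
coefficient `e i` at level `walkLevel m s i` (see `absLevel_forwardWalk`). -/
def walkPos (k m s : ℕ) (e : ℕ → ℤ) (j : ℕ) : ℤ :=
  s + j + m * ∑ i ∈ range j, e i * (2 * k + 1) ^ walkLevel m s i

theorem walkPos_succ (k m s : ℕ) (e : ℕ → ℤ) (j : ℕ) :
    walkPos k m s e (j + 1) =
      walkPos k m s e j + (1 + e j * m * (2 * k + 1) ^ walkLevel m s j) := by
  simp only [walkPos, sum_range_succ]
  push_cast
  ring

/-- Step `j < m` uses the digit of its level; afterwards the walk only moves by `+1`. -/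
def digitSchedule (m s : ℕ) (d : ℕ → ℤ) (j : ℕ) : ℤ :=
  if j < m then d (walkLevel m s j) else 0

theorem digitSchedule_bounds {k : ℕ} {d : ℕ → ℤ} (hd : ∀ ℓ, -(k : ℤ) ≤ d ℓ ∧ d ℓ ≤ k)
    (m s j : ℕ) : -(k : ℤ) ≤ digitSchedule m s d j ∧ digitSchedule m s d j ≤ k := by
  unfold digitSchedule
  split_ifs
  exacts [hd _, by omega]

theorem walkPos_digitSchedule (k m s : ℕ) (d : ℕ → ℤ) {L : ℕ} (hL : m ≤ L) :
    walkPos k m s (digitSchedule m s d) L =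
      s + L + m * ∑ ℓ ∈ range m, d ℓ * (2 * k + 1) ^ ℓ := by
  have hcoast : ∑ i ∈ range (L - m),
      digitSchedule m s d (m + i) * (2 * k + 1 : ℤ) ^ walkLevel m s (m + i) = 0 :=
    sum_eq_zero fun i _ => by simp [digitSchedule]
  have hdigits : ∑ i ∈ range m, digitSchedule m s d i * (2 * k + 1 : ℤ) ^ walkLevel m s i =
      ∑ i ∈ range m, d (walkLevel m s i) * (2 * k + 1 : ℤ) ^ walkLevel m s i :=
    sum_congr rfl fun i hi => by rw [digitSchedule, if_pos (mem_range.1 hi)]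
  rw [walkPos, ← Nat.add_sub_cancel' hL, sum_range_add, hcoast, add_zero, hdigits,
    sum_range_comp_walkLevel (fun ℓ => d ℓ * (2 * k + 1 : ℤ) ^ ℓ)]

theorem natCast_absN (k m : ℕ) : ((absN k m : ℕ) : ℤ) = m * (2 * k + 1) ^ m := by
  push_cast [absN]
  ring

section ForwardWalk

variable {k m : ℕ} [NeZero m]

instance : NeZero (absN k m) := ⟨mul_ne_zero (pow_ne_zero _ (by omega)) (NeZero.ne m)⟩

def forwardWalk (s : Fin (absN k m)) (e : ℕ → ℤ) (j : ℕ) : Fin (absN k m) :=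
  (walkPos k m s e j : Fin (absN k m))

variable (s : Fin (absN k m)) (e : ℕ → ℤ)

theorem natCast_forwardWalk (j : ℕ) :
    ((forwardWalk s e j : ℕ) : ℤ) = walkPos k m s e j % absN k m :=
  Fin.natCast_val_intCast _

theorem forwardWalk_mod (j : ℕ) : (forwardWalk s e j : ℕ) % m = (s + j) % m := by
  have hdvd : (m : ℤ) ∣ absN k m := by rw [natCast_absN]; exact dvd_mul_right _ _
  have h : ((forwardWalk s e j : ℕ) : ℤ) % m = ((s + j : ℕ) : ℤ) % m := by
    rw [natCast_forwardWalk, Int.emod_emod_of_dvd _ hdvd, walkPos, Int.add_mul_emod_self_left]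
    push_cast
    rfl
  exact_mod_cast h

theorem absLevel_forwardWalk (j : ℕ) : absLevel m (forwardWalk s e j) = walkLevel m s j := by
  rw [absLevel, forwardWalk_mod, walkLevel]

theorem forwardWalk_eq_of_modEq {j : ℕ} {t : Fin (absN k m)}
    (h : walkPos k m s e j ≡ t [ZMOD absN k m]) : forwardWalk s e j = t := by
  apply Fin.ext
  have : ((forwardWalk s e j : ℕ) : ℤ) = t := by
    rw [natCast_forwardWalk, h, Int.emod_eq_of_lt (by positivity) (by exact_mod_cast t.isLt)]
  exact_mod_cast this

theorem forwardWalk_zero : forwardWalk s e 0 = s :=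
  forwardWalk_eq_of_modEq s e (by simp [walkPos])

theorem absForwardEdge_forwardWalk (he : ∀ i, -(k : ℤ) ≤ e i ∧ e i ≤ k) (j : ℕ) :
    absForwardEdge k m (forwardWalk s e j) (forwardWalk s e (j + 1)) := by
  refine ⟨e j, (he j).1, (he j).2, ?_⟩
  rw [natCast_forwardWalk, natCast_forwardWalk, absLevel_forwardWalk, Int.emod_add_emod,
    walkPos_succ]

end ForwardWalk

theorem absolute_diameter_no_back_edges_general (k m : ℕ) (hm : 1 ≤ m)
    (s t : Fin (absN k m)) :
    ∃ L ≤ 2 * m - 1, ∃ w : ℕ → Fin (absN k m),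
      w 0 = s ∧ w L = t ∧ ∀ j < L, absForwardEdge k m (w j) (w (j + 1)) := by
  have : NeZero m := ⟨by omega⟩
  obtain ⟨r, hrm, hr⟩ := Int.exists_natCast_lt_modEq ((t : ℤ) - s) (m := m) hm
  -- `t - s = (m + r) + m * (D - 1)`
  obtain ⟨D, hD⟩ := hr.dvd
  obtain ⟨d, hd, hsum⟩ := exists_balanced_digits k m (D - 1)
  refine ⟨m + r, by omega, forwardWalk s (digitSchedule m s d), forwardWalk_zero s _,
    forwardWalk_eq_of_modEq s _ ?_,
    fun j _ => absForwardEdge_forwardWalk s _ (digitSchedule_bounds hd m s) j⟩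
  rw [walkPos_digitSchedule k m s d le_self_add, natCast_absN]
  convert (hsum.mul_left' (c := (m : ℤ))).add_left ((s : ℤ) + (m + r : ℕ)) using 1
  push_cast
  linear_combination hD

/-- In `B_absolute(k, m)`, for every ordered pair of nodes `(s, t)` there is a directed
path from `s` to `t` of length at most `2m - 1` that uses no back edge (hence in
particular the directed diameter is at most `2m - 1`). -/
theorem absolute_diameter_no_back_edges (k m : ℕ) (hk : 1 ≤ k) (hm : 1 ≤ m)
    (s t : Fin (absN k m)) :
    ∃ L ≤ 2 * m - 1, ∃ w : ℕ → Fin (absN k m),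
      w 0 = s ∧ w L = t ∧ ∀ j < L, absForwardEdge k m (w j) (w (j + 1)) :=
  absolute_diameter_no_back_edges_general k m hm s t
end

section
/- In the network B_clockwise(κ,m), for every node u and every target node t with u ≠ t, every greedy next hop v of u (i.e., any neighbor of u minimizing δ_clockwise(·,t) among the neighbors of u) satisfies δ_clockwise(v,t) < δ_clockwise(u,t). Consequently, greedy routing with distance function δ_clockwise always reaches its target in a finite number of hops, at most δ_clockwise(s,t) hops from source s. -/
/-!
The short link `u → u + 1` is always available and lowers the clockwise distance to any
target `t ≠ u` by exactly one, so a greedy hop, which is at least as good, lowers it by at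
least one. A natural-number potential that drops at every hop taken away from `t` can do so
only as many times as its initial value, so the route meets `t` within that many hops.
-/

theorem exists_le_eq_of_dist_lt {α : Type*} {t : α} (d : α → ℕ) (w : ℕ → α)
    (hw : ∀ j, w j ≠ t → d (w (j + 1)) < d (w j)) :
    ∃ L ≤ d (w 0), w L = t := by
  induction h : d (w 0) using Nat.strong_induction_on generalizing w with
  | _ k ih =>
    by_cases h0 : w 0 = t
    · exact ⟨0, Nat.zero_le _, h0⟩
    have hdec : d (w 1) < k := h ▸ hw 0 h0
    obtain ⟨L, hL, hwL⟩ := ih _ hdec (fun j => w (j + 1)) (fun j => hw (j + 1)) rfl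
    exact ⟨L + 1, by omega, hwL⟩

theorem clockDelta_eq_val_sub (n : ℕ) (u v : Fin n) : clockDelta n u v = (v - u : Fin n).val := by
  rw [clockDelta, Fin.val_sub]
  congr 1
  omega

theorem clockDelta_add_one_add_one {n : ℕ} [NeZero n] {u v : Fin n} (h : u ≠ v) :
    clockDelta n (u + 1) v + 1 = clockDelta n u v := by
  have hvu : v - u ≠ 0 := sub_ne_zero.2 h.symm
  rw [clockDelta_eq_val_sub, clockDelta_eq_val_sub, sub_add_eq_sub_sub,
    Fin.val_sub_one_of_ne_zero hvu]
  exact Nat.sub_add_cancel (Nat.one_le_iff_ne_zero.2 (Fin.val_ne_zero_iff.2 hvu))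

theorem clockEdge_add_one {κ m : ℕ} [NeZero (κ ^ m * m)] (u : Fin (κ ^ m * m)) :
    clockEdge κ m u (u + 1) := by
  have hκ : 0 < κ := Nat.pos_of_ne_zero fun h => NeZero.ne (κ ^ m * m) (by
    rcases m with _ | m <;> simp [h])
  exact ⟨0, hκ, by simp [Fin.val_add]⟩

theorem clockDelta_lt_of_clockGreedyStep {κ m : ℕ} {t u v : Fin (κ ^ m * m)} (hut : u ≠ t)
    (h : clockGreedyStep κ m t u v) :
    clockDelta (κ ^ m * m) v t < clockDelta (κ ^ m * m) u t := by
  have := u.neZero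
  calc clockDelta _ v t ≤ clockDelta _ (u + 1) t := h.2 _ (clockEdge_add_one u)
    _ < clockDelta _ u t := by rw [← clockDelta_add_one_add_one hut]; exact lt_add_one _

theorem clockwise_greedy_progress_general (κ m : ℕ) :
    (∀ u v t : Fin (κ ^ m * m), u ≠ t → clockGreedyStep κ m t u v →
      clockDelta (κ ^ m * m) v t < clockDelta (κ ^ m * m) u t) ∧
    (∀ s t : Fin (κ ^ m * m), ∀ w : ℕ → Fin (κ ^ m * m), w 0 = s →
      (∀ j, w j ≠ t → clockGreedyStep κ m t (w j) (w (j + 1))) →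
      ∃ L ≤ clockDelta (κ ^ m * m) s t, w L = t) := by
  refine ⟨fun u v t hut h => clockDelta_lt_of_clockGreedyStep hut h, ?_⟩
  rintro s t w rfl hw
  exact exists_le_eq_of_dist_lt (clockDelta _ · t) w
    fun j hj => clockDelta_lt_of_clockGreedyStep hj (hw j hj)

/-- In `B_clockwise(κ, m)`: (1) every greedy next hop strictly decreases the clockwise
distance to the target; (2) consequently every greedy route from `s` reaches the target `t`
within `δ_clockwise(s, t)` hops. -/
theorem clockwise_greedy_progress (κ m : ℕ) (hκ : 1 ≤ κ) (hm : 1 ≤ m) :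
    (∀ u v t : Fin (κ ^ m * m), u ≠ t → clockGreedyStep κ m t u v →
      clockDelta (κ ^ m * m) v t < clockDelta (κ ^ m * m) u t) ∧
    (∀ s t : Fin (κ ^ m * m), ∀ w : ℕ → Fin (κ ^ m * m), w 0 = s →
      (∀ j, w j ≠ t → clockGreedyStep κ m t (w j) (w (j + 1))) →
      ∃ L ≤ clockDelta (κ ^ m * m) s t, w L = t) :=
  clockwise_greedy_progress_general κ m
end

section
/- In the network B_clockwise(κ,m), define SPAN(u) = { v : 0 ≤ δ_clockwise(u,v) < m·κ^{ℓ(u)+1} }. If ℓ(u) = 0, t ∈ SPAN(u), and δ_clockwise(u,t) ≥ m, then every greedy next hop v of u (any neighbor of u minimizing δ_clockwise(·,t)) satisfies ℓ(v) = m−1 and δ_clockwise(v,t) < m. -/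
/-- `v ∈ SPAN(u)`, i.e. `0 ≤ δ_clockwise(u, v) < m · κ^{ℓ(u)+1}`. -/
def clockInSpan (κ m : ℕ) (u v : Fin (κ ^ m * m)) : Prop :=
  clockDelta (κ ^ m * m) u v < m * κ ^ (clockLevel m u + 1)

lemma clockDelta_lt {n : ℕ} (u v : Fin n) : clockDelta n u v < n :=
  Nat.mod_lt _ u.pos

lemma natCast_clockDelta {n : ℕ} (u v : Fin n) :
    (clockDelta n u v : ℤ) = ((v : ℤ) - u) % n := by
  have hu : (u : ℕ) ≤ v + n := u.isLt.le.trans (Nat.le_add_left _ _)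
  rw [clockDelta, Int.natCast_mod, Nat.cast_sub hu, Nat.cast_add, add_sub_right_comm,
    Int.add_emod_right]

lemma clockDelta_of_val_eq_add_mod {n : ℕ} {u w : Fin n} {s : ℕ} (hs : s < n)
    (hw : (w : ℕ) = ((u : ℕ) + s) % n) : clockDelta n u w = s := by
  have hw' : (w : ℤ) ≡ u + s [ZMOD n] := by
    rw [hw, Int.natCast_mod, Nat.cast_add]
    exact Int.mod_modEq _ _
  have hsub : ((w : ℤ) - u) % n = s := by
    rw [(hw'.sub_right (u : ℤ)).eq, add_sub_cancel_left,
      Int.emod_eq_of_lt (by positivity) (by exact_mod_cast hs)]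
  exact_mod_cast (natCast_clockDelta u w).trans hsub

lemma clockDelta_add_clockDelta {n : ℕ} {u w t : Fin n}
    (h : clockDelta n u w ≤ clockDelta n u t) :
    clockDelta n u w + clockDelta n w t = clockDelta n u t := by
  have hmod : (clockDelta n u t - clockDelta n u w : ℤ) ≡ t - w [ZMOD n] := by
    rw [natCast_clockDelta, natCast_clockDelta, ← sub_sub_sub_cancel_right (t : ℤ) w u]
    exact (Int.mod_modEq _ _).sub (Int.mod_modEq _ _)
  have hlt := clockDelta_lt u t
  have hwt : (clockDelta n w t : ℤ) = clockDelta n u t - clockDelta n u w := by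
    rw [natCast_clockDelta, ← hmod.eq, Int.emod_eq_of_lt (by omega) (by omega)]
  omega

lemma clockEdge.val_mod {κ m : ℕ} {u v : Fin (κ ^ m * m)} (h : clockEdge κ m u v) :
    (v : ℕ) % m = ((u : ℕ) + 1) % m := by
  obtain ⟨i, -, hv⟩ := h
  rw [hv, Nat.mod_mod_of_dvd _ (dvd_mul_left m _), ← add_assoc,
    show i * m * κ ^ clockLevel m u = i * κ ^ clockLevel m u * m by ring,
    Nat.add_mul_mod_self_right]

lemma clockEdge.clockLevel_eq_of_clockLevel_eq_zero {κ m : ℕ} {u v : Fin (κ ^ m * m)}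
    (h : clockEdge κ m u v) (hu : clockLevel m u = 0) : clockLevel m v = m - 1 := by
  have hm : 0 < m := Nat.pos_of_mul_pos_left u.pos
  have hum : (u : ℕ) % m = m - 1 := by
    have hlt := Nat.mod_lt u hm
    unfold clockLevel at hu
    omega
  have hvm : (v : ℕ) % m = 0 := by
    have hdvd : m ∣ (u : ℕ) + 1 := by
      have hle := Nat.mod_le (u : ℕ) m
      rw [show (u : ℕ) + 1 = (u - u % m) + m by omega]
      exact (Nat.dvd_sub_mod _).add dvd_rfl
    rw [h.val_mod, Nat.mod_eq_zero_of_dvd hdvd]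
  simp only [clockLevel, hvm, Nat.sub_zero]

-- The witness is the longest link of `u` that does not overshoot `t`.
lemma exists_clockEdge_clockDelta_lt {κ m : ℕ} {u t : Fin (κ ^ m * m)}
    (hspan : clockInSpan κ m u t) (hne : 0 < clockDelta (κ ^ m * m) u t) :
    ∃ w, clockEdge κ m u w ∧ clockDelta (κ ^ m * m) w t < m * κ ^ clockLevel m u := by
  set d := clockDelta (κ ^ m * m) u t
  set M := m * κ ^ clockLevel m u
  have hdM : d < κ * M := by
    rw [mul_comm κ, mul_assoc, ← pow_succ]
    exact hspan
  have hM : 0 < M := Nat.pos_of_mul_pos_left (hne.trans hdM)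
  set i := (d - 1) / M
  have hi : i < κ := (Nat.div_lt_iff_lt_mul hM).2 (by omega)
  set s := 1 + i * m * κ ^ clockLevel m u
  have hds : d = s + (d - 1) % M := by
    have hs : s = 1 + i * M := by simp only [s, M, mul_assoc]
    have hdiv : (d - 1) % M + i * M = d - 1 := Nat.mod_add_div' _ _
    omega
  have hsn : s < κ ^ m * m := by have hdn := clockDelta_lt u t; omega
  set w : Fin (κ ^ m * m) := ⟨((u : ℕ) + s) % (κ ^ m * m), Nat.mod_lt _ u.pos⟩
  have huw : clockDelta (κ ^ m * m) u w = s := clockDelta_of_val_eq_add_mod hsn rfl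
  refine ⟨w, ⟨i, hi, rfl⟩, ?_⟩
  have hsplit := clockDelta_add_clockDelta (t := t) (huw.trans_le (by omega))
  have hrem := Nat.mod_lt (d - 1) hM
  omega

theorem clockwise_greedy_phase_two_end_general (κ m : ℕ)
    (u t v : Fin (κ ^ m * m))
    (hlev : clockLevel m u = 0)
    (hspan : clockInSpan κ m u t)
    (hfar : m ≤ clockDelta (κ ^ m * m) u t)
    (hgreedy : clockGreedyStep κ m t u v) :
    clockLevel m v = m - 1 ∧ clockDelta (κ ^ m * m) v t < m := by
  have hm : 0 < m := Nat.pos_of_mul_pos_left u.pos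
  obtain ⟨w, huw, hwt⟩ := exists_clockEdge_clockDelta_lt hspan (hm.trans_le hfar)
  rw [hlev, pow_zero, mul_one] at hwt
  exact ⟨hgreedy.1.clockLevel_eq_of_clockLevel_eq_zero hlev, (hgreedy.2 w huw).trans_lt hwt⟩

/-- In `B_clockwise(κ, m)`: if `ℓ(u) = 0`, `t ∈ SPAN(u)` and `δ_clockwise(u, t) ≥ m`, then
every greedy next hop `v` of `u` towards `t` satisfies `ℓ(v) = m - 1` and
`δ_clockwise(v, t) < m`. -/
theorem clockwise_greedy_phase_two_end (κ m : ℕ) (hκ : 1 ≤ κ) (hm : 1 ≤ m)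
    (u t v : Fin (κ ^ m * m))
    (hlev : clockLevel m u = 0)
    (hspan : clockInSpan κ m u t)
    (hfar : m ≤ clockDelta (κ ^ m * m) u t)
    (hgreedy : clockGreedyStep κ m t u v) :
    clockLevel m v = m - 1 ∧ clockDelta (κ ^ m * m) v t < m :=
  clockwise_greedy_phase_two_end_general κ m u t v hlev hspan hfar hgreedy
end
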